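/- Fix an integer n ≥ 1, a real constant Λ ≤ 0, a real K > 0, and η ∈ (−∞, ∞]. Let (a, b, c) be an unstable trajectory of (0, K, K) on (−∞, η) with a(u) < b(u) for all u < η, and assume a(u)b(u) → +∞ as u → η⁻. Then for every u₀ < η the improper integral ∫_{u₀}^{η} a(u)b(u)c(u) du diverges to +∞ (i.e. the function abc is not integrable on [u₀, η)). -/

import Mathlib

open Filter Set

/-- A solution (a, b, c) of the reduced Kähler–Einstein system on the interval
(−∞, η) (η ∈ (−∞, ∞] encoded as an `EReal`), positive there, and converging to the
critical point (0, K, K) as u → −∞: an unstable trajectory of (0, K, K). -/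
def IsUnstableTrajectory (n : ℕ) (Λ K : ℝ) (η : EReal) (a b c : ℝ → ℝ) : Prop :=
  (∀ u : ℝ, (u : EReal) < η →
    HasDerivAt a ((1/2) * a u * (b u ^ 2 + c u ^ 2 - a u ^ 2)) u ∧
    HasDerivAt b ((1/2) * b u * (c u ^ 2 + a u ^ 2 - b u ^ 2)) u ∧
    HasDerivAt c ((1/2) * (n : ℝ) * c u *
      (a u ^ 2 + b u ^ 2 - c u ^ 2 - (2 * Λ / (n : ℝ)) * a u ^ 2 * b u ^ 2)) u ∧
    0 < a u ∧ 0 < b u ∧ 0 < c u) ∧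
  Tendsto a atBot (nhds 0) ∧ Tendsto b atBot (nhds K) ∧ Tendsto c atBot (nhds K)

/-- The filter of approach to η ∈ (−∞, ∞] from the left within ℝ:
it is 𝓝[<] η when η is real, and `atTop` when η = ∞. -/
noncomputable def nhdsLeft (η : EReal) : Filter ℝ :=
  Filter.comap (fun u : ℝ => (u : EReal)) (nhdsWithin η (Set.Iio η))


section Aux
set_option maxHeartbeats 1000000


lemma barrier_lemma {g g' : ℝ → ℝ} {s x G : ℝ}
    (hd : ∀ u ∈ Icc s x, HasDerivAt g (g' u) u)
    (hneg : ∀ u ∈ Icc s x, G < g u → g' u < 0) :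
    ∀ v ∈ Icc s x, g v ≤ max (g s) G := by
  intro v hv
  by_contra hgv
  push_neg at hgv
  set M := max (g s) G with hM
  have hsv : s ≤ v := hv.1
  have hcont : ContinuousOn g (Icc s x) := fun u hu => ((hd u hu).continuousAt).continuousWithinAt
  set T : Set ℝ := {u ∈ Icc s v | g u ≤ M} with hT
  have hsT : s ∈ T := ⟨⟨le_refl s, hsv⟩, le_max_left _ _⟩
  have hTsub : T ⊆ Icc s v := fun u hu => hu.1
  have hIccsub : Icc s v ⊆ Icc s x := Icc_subset_Icc le_rfl hv.2
  have hTclosed : IsClosed T := by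
    have heq : T = Icc s v ∩ g ⁻¹' (Iic M) := by ext u; simp only [hT, Set.mem_setOf_eq, Set.mem_inter_iff, Set.mem_preimage, Set.mem_Iic]
    rw [heq]
    exact (hcont.mono hIccsub).preimage_isClosed_of_isClosed isClosed_Icc isClosed_Iic
  have hTbdd : BddAbove T := ⟨v, fun u hu => (hTsub hu).2⟩
  have htT : sSup T ∈ T := hTclosed.csSup_mem ⟨s, hsT⟩ hTbdd
  have htv : sSup T < v :=
    lt_of_le_of_ne (htT.1.2) (fun h => absurd (h ▸ htT.2) (not_le.2 hgv))
  have hgt : ∀ u ∈ Ioc (sSup T) v, M < g u := by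
    intro u hu
    by_contra hle
    push_neg at hle
    have huT : u ∈ T := ⟨⟨le_trans htT.1.1 hu.1.le, hu.2⟩, hle⟩
    exact absurd (le_csSup hTbdd huT) (not_le.2 hu.1)
  have hanti : StrictAntiOn g (Icc (sSup T) v) := by
    apply strictAntiOn_of_deriv_neg (convex_Icc _ v)
      (hcont.mono (Icc_subset_Icc htT.1.1 hv.2))
    intro u hu
    rw [interior_Icc] at hu
    have huIcc : u ∈ Icc s x := ⟨le_trans htT.1.1 hu.1.le, le_trans hu.2.le hv.2⟩
    rw [(hd u huIcc).deriv]
    exact hneg u huIcc (lt_of_le_of_lt (le_max_right _ _) (hgt u ⟨hu.1, hu.2.le⟩))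
  have h2 := hanti (left_mem_Icc.2 htv.le) (right_mem_Icc.2 htv.le) htv
  have := htT.2
  linarith

lemma mono_lemma {g g' : ℝ → ℝ} {s x : ℝ}
    (hd : ∀ u ∈ Icc s x, HasDerivAt g (g' u) u)
    (hpos : ∀ u ∈ Icc s x, 0 ≤ g' u) : MonotoneOn g (Icc s x) := by
  apply monotoneOn_of_deriv_nonneg (convex_Icc s x)
    (fun u hu => (hd u hu).continuousAt.continuousWithinAt)
  · intro u hu
    rw [interior_Icc] at hu
    exact (hd u (Ioo_subset_Icc_self hu)).differentiableAt.differentiableWithinAt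
  · intro u hu
    rw [interior_Icc] at hu
    rw [(hd u (Ioo_subset_Icc_self hu)).deriv]
    exact hpos u (Ioo_subset_Icc_self hu)
section
variable (n : ℕ) (Λ : ℝ) (η : EReal) (a b c : ℝ → ℝ)

lemma key_bound (hn : 1 ≤ n) (hΛ : Λ ≤ 0)
    (hsys : ∀ u : ℝ, (u : EReal) < η →
      HasDerivAt a ((1/2) * a u * (b u ^ 2 + c u ^ 2 - a u ^ 2)) u ∧
      HasDerivAt b ((1/2) * b u * (c u ^ 2 + a u ^ 2 - b u ^ 2)) u ∧
      HasDerivAt c ((1/2) * (n : ℝ) * c u *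
        (a u ^ 2 + b u ^ 2 - c u ^ 2 - (2 * Λ / (n : ℝ)) * a u ^ 2 * b u ^ 2)) u ∧
      0 < a u ∧ 0 < b u ∧ 0 < c u)
    (hab : ∀ u : ℝ, (u : EReal) < η → a u < b u)
    (u₀ : ℝ) (hu₀ : (u₀ : EReal) < η) :
    ∃ M : ℝ, 0 < M ∧ ∀ x : ℝ, u₀ ≤ x → (x : EReal) < η →
      (Real.log (a x * b x) - Real.log (a u₀ * b u₀)) / M ≤ ∫ u in u₀..x, a u * b u * c u := by
  have hn0 : (0:ℝ) < (n:ℝ) := by exact_mod_cast hn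
  obtain ⟨-, -, -, ha0, hb0, hc0⟩ := hsys u₀ hu₀
  set α := a u₀ with hα
  set β := a u₀ * b u₀ with hβ
  have hβ0 : 0 < β := mul_pos ha0 hb0
  set C₀ : ℝ := 1/β + 1/α^2 - 2*Λ/n with hC₀
  have hΛn : 2*Λ/n ≤ 0 := div_nonpos_of_nonpos_of_nonneg (by linarith) hn0.le
  have hC₀0 : 0 < C₀ := by
    have h1 : 0 < 1/β := by positivity
    have h2 : 0 < 1/α^2 := by positivity
    simp only [hC₀]
    linarith
  set G : ℝ := Real.sqrt (n * C₀) with hG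
  set M : ℝ := max (c u₀ / β) G with hM
  have hM0 : 0 < M := lt_of_lt_of_le (by positivity) (le_max_left _ _)
  refine ⟨M, hM0, fun x hx hxη => ?_⟩
  -- every point of [u₀, x] is below η
  have hDη : ∀ u ∈ Icc u₀ x, (u : EReal) < η := by
    intro u hu
    exact lt_of_le_of_lt (EReal.coe_le_coe_iff.2 hu.2) hxη
  -- derivative of the product ab
  have hABd : ∀ u ∈ Icc u₀ x, HasDerivAt (fun v => a v * b v) (a u * b u * c u ^ 2) u := by
    intro u hu
    obtain ⟨ha', hb', -, -, -, -⟩ := hsys u (hDη u hu)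
    exact (ha'.mul hb').congr_deriv (by ring)
  -- a and ab are monotone on [u₀, x]
  have hamono : MonotoneOn a (Icc u₀ x) := by
    apply mono_lemma (g' := fun u => (1/2) * a u * (b u ^ 2 + c u ^ 2 - a u ^ 2))
    · intro u hu; exact (hsys u (hDη u hu)).1
    · intro u hu
      obtain ⟨-, -, -, hA, hB, hC⟩ := hsys u (hDη u hu)
      have hAB := hab u (hDη u hu)
      have h1 : a u ^ 2 < b u ^ 2 := by nlinarith
      nlinarith [sq_nonneg (c u)]
  have habmono : MonotoneOn (fun v => a v * b v) (Icc u₀ x) := by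
    apply mono_lemma (g' := fun u => a u * b u * c u ^ 2)
    · exact hABd
    · intro u hu
      obtain ⟨-, -, -, hA, hB, hC⟩ := hsys u (hDη u hu)
      positivity
  have hαle : ∀ u ∈ Icc u₀ x, α ≤ a u := fun u hu =>
    hamono (left_mem_Icc.2 hx) hu hu.1
  have hβle : ∀ u ∈ Icc u₀ x, β ≤ a u * b u := fun u hu =>
    habmono (left_mem_Icc.2 hx) hu hu.1
  -- the ratio g = c/(ab)
  set g : ℝ → ℝ := fun v => c v / (a v * b v) with hg
  have hgd : ∀ u ∈ Icc u₀ x, HasDerivAt g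
      (((1/2) * (n : ℝ) * c u *
        (a u ^ 2 + b u ^ 2 - c u ^ 2 - (2 * Λ / (n : ℝ)) * a u ^ 2 * b u ^ 2) * (a u * b u)
        - c u * (a u * b u * c u ^ 2)) / (a u * b u) ^ 2) u := by
    intro u hu
    obtain ⟨-, -, hc', hA, hB, -⟩ := hsys u (hDη u hu)
    exact hc'.div (hABd u hu) (by positivity)
  -- barrier estimate : g stays ≤ M
  have hgM : ∀ v ∈ Icc u₀ x, g v ≤ M := by
    have hbar := barrier_lemma (g := g) (g' := fun u => deriv g u) (s := u₀) (x := x) (G := G)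
      (fun u hu => ((hgd u hu).differentiableAt).hasDerivAt)
      ?_
    · intro v hv
      have := hbar v hv
      have hgu₀ : g u₀ = c u₀ / β := rfl
      rw [hgu₀] at this
      rw [hM]
      exact this
    · -- negativity of the derivative above the barrier G
      intro u hu hGg
      show deriv g u < 0
      obtain ⟨-, -, -, hA, hB, hC⟩ := hsys u (hDη u hu)
      have hAB : 0 < a u * b u := mul_pos hA hB
      rw [(hgd u hu).deriv]
      apply div_neg_of_neg_of_pos _ (by positivity)
      -- notation
      have hab' := hab u (hDη u hu)
      have hα := hαle u hu
      have hβ := hβle u hu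
      -- from G < g u, deduce n*C₀*(ab)² < c²
      have hsq : (n : ℝ) * C₀ < (g u) ^ 2 := by
        have hgpos : 0 < g u := by positivity
        have := (Real.sqrt_lt' hgpos).1 hGg
        linarith
      have hc2 : (n : ℝ) * C₀ * (a u * b u) ^ 2 < c u ^ 2 := by
        have : (g u) ^ 2 * (a u * b u) ^ 2 = c u ^ 2 := by
          rw [hg]
          field_simp
        nlinarith [sq_nonneg (a u * b u), mul_pos hAB hAB]
      -- Q ≤ C₀ (ab)²
      have hQ : (n : ℝ) * (a u ^ 2 + b u ^ 2) - 2 * Λ * (a u * b u) ^ 2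
          ≤ (n : ℝ) * C₀ * (a u * b u) ^ 2 := by
        have hexp : (n : ℝ) * C₀ * (a u * b u) ^ 2 =
            (n : ℝ) * (a u * b u) ^ 2 * (1/β) + (n : ℝ) * (a u * b u) ^ 2 * (1/α^2)
            - 2 * Λ * (a u * b u) ^ 2 := by
          rw [hC₀]
          field_simp
        rw [hexp]
        have h1 : a u ^ 2 * β ≤ (a u * b u) ^ 2 := by
          have h0 : a u ^ 2 ≤ a u * b u := by nlinarith
          have := mul_le_mul h0 hβ hβ0.le (mul_pos hA hB).le
          nlinarith [this]
        have h2 : b u ^ 2 * α ^ 2 ≤ (a u * b u) ^ 2 := by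
          have hα2 : α ^ 2 ≤ a u ^ 2 := by nlinarith
          nlinarith [mul_le_mul_of_nonneg_left hα2 (sq_nonneg (b u))]
        have h1' : a u ^ 2 ≤ (a u * b u) ^ 2 * (1/β) := by
          rw [mul_one_div, le_div_iff₀ hβ0]; exact h1
        have h2' : b u ^ 2 ≤ (a u * b u) ^ 2 * (1/α^2) := by
          rw [mul_one_div, le_div_iff₀ (by positivity)]; exact h2
        nlinarith
      -- the bracket is negative
      have hΛid : (1/2) * (n : ℝ) * ((2 * Λ / (n : ℝ)) * a u ^ 2 * b u ^ 2)
          = Λ * (a u * b u) ^ 2 := by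
        field_simp
      have hbr : (1/2) * (n : ℝ) *
          (a u ^ 2 + b u ^ 2 - c u ^ 2 - (2 * Λ / (n : ℝ)) * a u ^ 2 * b u ^ 2) - c u ^ 2 < 0 := by
        have hn1 : (1:ℝ) ≤ (n : ℝ) := by exact_mod_cast hn
        have hC2 : 0 < c u ^ 2 := by positivity
        nlinarith [hQ, hc2, hΛid]
      calc (1/2) * (n : ℝ) * c u *
            (a u ^ 2 + b u ^ 2 - c u ^ 2 - (2 * Λ / (n : ℝ)) * a u ^ 2 * b u ^ 2) * (a u * b u)
            - c u * (a u * b u * c u ^ 2)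
          = (c u * (a u * b u)) * ((1/2) * (n : ℝ) *
            (a u ^ 2 + b u ^ 2 - c u ^ 2 - (2 * Λ / (n : ℝ)) * a u ^ 2 * b u ^ 2) - c u ^ 2) := by
            ring
        _ < 0 := mul_neg_of_pos_of_neg (by positivity) hbr
  -- pointwise bound  c²/M ≤ abc
  have hpt : ∀ u ∈ Icc u₀ x, c u ^ 2 / M ≤ a u * b u * c u := by
    intro u hu
    obtain ⟨-, -, -, hA, hB, hC⟩ := hsys u (hDη u hu)
    have hAB : 0 < a u * b u := mul_pos hA hB
    have hcM : c u ≤ M * (a u * b u) := by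
      have := hgM u hu
      rw [hg] at this
      calc c u = c u / (a u * b u) * (a u * b u) := by field_simp
        _ ≤ M * (a u * b u) := by
            apply mul_le_mul_of_nonneg_right this hAB.le
    rw [div_le_iff₀ hM0]
    nlinarith
  -- continuity on the interval
  have hcontABC : ContinuousOn (fun u => a u * b u * c u) (Icc u₀ x) := by
    intro u hu
    obtain ⟨ha', hb', hc', -, -, -⟩ := hsys u (hDη u hu)
    exact (((ha'.continuousAt).mul (hb'.continuousAt)).mul (hc'.continuousAt)).continuousWithinAt
  have hcontC2 : ContinuousOn (fun u => c u ^ 2) (Icc u₀ x) := by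
    intro u hu
    obtain ⟨-, -, hc', -, -, -⟩ := hsys u (hDη u hu)
    exact ((hc'.continuousAt).pow 2).continuousWithinAt
  have huIcc : uIcc u₀ x = Icc u₀ x := uIcc_of_le hx
  -- ∫ c² = log(ab x) - log(ab u₀)
  have hlogd : ∀ u ∈ uIcc u₀ x, HasDerivAt (fun v => Real.log (a v * b v)) (c u ^ 2) u := by
    intro u hu
    rw [huIcc] at hu
    obtain ⟨-, -, -, hA, hB, -⟩ := hsys u (hDη u hu)
    have hAB : a u * b u ≠ 0 := by positivity
    convert (hABd u hu).log hAB using 1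
    field_simp
  have hintC2 : IntervalIntegrable (fun u => c u ^ 2) MeasureTheory.volume u₀ x :=
    (huIcc ▸ hcontC2).intervalIntegrable
  have hlogint : ∫ u in u₀..x, c u ^ 2 = Real.log (a x * b x) - Real.log (a u₀ * b u₀) :=
    intervalIntegral.integral_eq_sub_of_hasDerivAt hlogd hintC2
  -- compare the integrals
  have hintABC : IntervalIntegrable (fun u => a u * b u * c u) MeasureTheory.volume u₀ x :=
    (huIcc ▸ hcontABC).intervalIntegrable
  have hintC2M : IntervalIntegrable (fun u => c u ^ 2 / M) MeasureTheory.volume u₀ x :=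
    hintC2.div_const M
  have hmono := intervalIntegral.integral_mono_on hx hintC2M hintABC hpt
  rw [intervalIntegral.integral_div, hlogint] at hmono
  exact hmono

end


lemma nhdsLeftAux_neBot {η : EReal} (hη : η ≠ ⊥) : (Filter.comap (fun u : ℝ => (u : EReal)) (nhdsWithin η (Set.Iio η))).NeBot := by
  induction η with
  | bot => exact absurd rfl hη
  | coe y =>
    have hT : Tendsto (fun u : ℝ => (u : EReal)) (nhdsWithin y (Iio y))
        (nhdsWithin (y : EReal) (Iio (y : EReal))) := by
      rw [tendsto_nhdsWithin_iff]
      constructor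
      · exact (continuous_coe_real_ereal.tendsto y).mono_left nhdsWithin_le_nhds
      · filter_upwards [self_mem_nhdsWithin] with x hx
        exact EReal.coe_lt_coe_iff.2 hx
    exact Filter.neBot_of_le (Filter.tendsto_iff_comap.1 hT)
  | top =>
    have hT : Tendsto (fun u : ℝ => (u : EReal)) atTop
        (nhdsWithin (⊤ : EReal) (Iio (⊤ : EReal))) := by
      rw [tendsto_nhdsWithin_iff]
      constructor
      · rw [EReal.tendsto_nhds_top_iff_real]
        intro r
        filter_upwards [eventually_gt_atTop r] with x hx
        exact EReal.coe_lt_coe_iff.2 hx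
      · filter_upwards with x
        exact EReal.coe_lt_top x
    exact Filter.neBot_of_le (Filter.tendsto_iff_comap.1 hT)

end Aux

/- STATEMENT 15: on an unstable trajectory of (0, K, K) with K > 0, Λ ≤ 0, a < b and
ab → ∞ at the right end, the improper integral ∫_{u₀}^{η} abc du diverges to +∞,
i.e. abc is not integrable on [u₀, η), for every u₀ < η (completeness at u → η). -/

theorem geodesic_distance_to_eta_is_infinite
    (n : ℕ) (hn : 1 ≤ n) (Λ : ℝ) (hΛ : Λ ≤ 0) (K : ℝ) (hK : 0 < K)
    (η : EReal) (hη : η ≠ ⊥)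
    (a b c : ℝ → ℝ) (h : IsUnstableTrajectory n Λ K η a b c)
    (hab : ∀ u : ℝ, (u : EReal) < η → a u < b u)
    (habinf : Tendsto (fun u => a u * b u) (nhdsLeft η) atTop) :
    ∀ u₀ : ℝ, (u₀ : EReal) < η →
      Tendsto (fun x => ∫ u in u₀..x, a u * b u * c u) (nhdsLeft η) atTop ∧
      ¬ MeasureTheory.IntegrableOn (fun u => a u * b u * c u)
          {u : ℝ | u₀ ≤ u ∧ (u : EReal) < η} := by
  intro u₀ hu₀
  obtain ⟨hsys, -, -, -⟩ := h
  obtain ⟨M, hM0, hkey⟩ := key_bound n Λ η a b c hn hΛ hsys hab u₀ hu₀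
  haveI hNB : Filter.NeBot (nhdsLeft η) := nhdsLeftAux_neBot hη
  have hev1 : ∀ᶠ x : ℝ in nhdsLeft η, u₀ ≤ x := by
    have hmem : Ioi ((u₀ : ℝ) : EReal) ∈ nhdsWithin η (Iio η) :=
      nhdsWithin_le_nhds (isOpen_Ioi.mem_nhds hu₀)
    have hpre := preimage_mem_comap (m := fun u : ℝ => (u : EReal)) hmem
    refine Filter.mem_of_superset hpre ?_
    intro x hx
    exact (EReal.coe_lt_coe_iff.1 hx).le
  have hev2 : ∀ᶠ x : ℝ in nhdsLeft η, (x : EReal) < η := by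
    have hpre := preimage_mem_comap (m := fun u : ℝ => (u : EReal))
      (self_mem_nhdsWithin (s := Iio η) (a := η))
    exact Filter.mem_of_superset hpre fun x hx => hx
  have hlow : Tendsto (fun x => (Real.log (a x * b x) - Real.log (a u₀ * b u₀)) / M)
      (nhdsLeft η) atTop := by
    apply Tendsto.atTop_div_const hM0
    simp only [sub_eq_add_neg]
    exact tendsto_atTop_add_const_right _ _ (Real.tendsto_log_atTop.comp habinf)
  have htend : Tendsto (fun x => ∫ u in u₀..x, a u * b u * c u) (nhdsLeft η) atTop := by
    apply tendsto_atTop_mono' (nhdsLeft η) _ hlow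
    filter_upwards [hev1, hev2] with x h1 h2
    exact hkey x h1 h2
  refine ⟨htend, fun hint => ?_⟩
  have hSmeas : MeasurableSet {u : ℝ | u₀ ≤ u ∧ (u : EReal) < η} := by
    have hSeq : {u : ℝ | u₀ ≤ u ∧ (u : EReal) < η}
        = Ici u₀ ∩ ((fun u : ℝ => (u : EReal)) ⁻¹' Iio η) := rfl
    rw [hSeq]
    exact measurableSet_Ici.inter
      ((isOpen_Iio.preimage continuous_coe_real_ereal).measurableSet)
  have h0 : (0 : ℝ → ℝ) ≤ᵐ[MeasureTheory.volume.restrict {u : ℝ | u₀ ≤ u ∧ (u : EReal) < η}]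
      fun u => a u * b u * c u := by
    apply MeasureTheory.ae_restrict_of_forall_mem hSmeas
      (p := fun u => (0 : ℝ → ℝ) u ≤ a u * b u * c u)
    intro u hu
    obtain ⟨-, -, -, hA, hB, hC⟩ := hsys u hu.2
    have : (0 : ℝ → ℝ) u = 0 := rfl
    rw [this]
    positivity
  have hub : ∀ᶠ x in nhdsLeft η, (∫ u in u₀..x, a u * b u * c u)
      ≤ ∫ u in {u : ℝ | u₀ ≤ u ∧ (u : EReal) < η}, a u * b u * c u := by
    filter_upwards [hev1, hev2] with x h1 h2
    rw [intervalIntegral.integral_of_le h1]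
    apply MeasureTheory.setIntegral_mono_set hint h0
    apply HasSubset.Subset.eventuallyLE
    intro u hu
    exact ⟨le_of_lt hu.1, lt_of_le_of_lt (EReal.coe_le_coe_iff.2 hu.2) h2⟩
  have hbig : ∀ᶠ x in nhdsLeft η,
      (∫ u in {u : ℝ | u₀ ≤ u ∧ (u : EReal) < η}, a u * b u * c u) + 1
        ≤ ∫ u in u₀..x, a u * b u * c u :=
    htend.eventually_ge_atTop _
  obtain ⟨x, hx1, hx2⟩ := (hub.and hbig).exists
  linarith
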